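/- Let G = (V,E) be a finite simple vertex-transitive graph (its automorphism group acts transitively on V) and let x ∈ (0,1). Then y_G(u,v) > 0 for every edge {u,v} ∈ E, and z_G(u,v) < x for every pair of distinct non-adjacent vertices u, v. -/

import Mathlib

open Matrix Finset Real

/-- `M ∈ 𝒜(G,x)`: `M` is a real symmetric positive definite `V × V` matrix with
`1`s on the diagonal and value `x` at every edge of `G`. -/
def memA {V : Type*} [Fintype V] [DecidableEq V] (G : SimpleGraph V) (x : ℝ) (M : Matrix V V ℝ) : Prop :=
  M.PosDef ∧ (∀ i, M i i = 1) ∧ ∀ i j, G.Adj i j → M i j = x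

/-- `A = 𝔸_G(x)`: `A` is the determinant-maximizing matrix in `𝒜(G,x)`,
so that `τ(G,x) = A.det`. -/
def IsMaxA {V : Type*} [Fintype V] [DecidableEq V] (G : SimpleGraph V) (x : ℝ) (A : Matrix V V ℝ) : Prop :=
  memA G x A ∧ ∀ M : Matrix V V ℝ, memA G x M → M.det ≤ A.det

/-!
Write `B = A⁻¹`. Maximality of `det` on the affine slice `𝒜(G, x)` gives the first-order
condition `B u v = 0` at non-edges, and `log det M - log det A ≤ tr (B M) - |V|` (with equality
only at `M = A`) makes the maximiser unique, hence invariant under every symmetry of `G`.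

Let `Γ` act transitively on `V` and let `G` be `Γ`-invariant; argue by induction on the number
of edges. Deleting the `Γ`-orbit of an edge `uv` leaves a smaller invariant graph `G'`, whose
maximiser `A'` is `< x` on the deleted orbit. Since `A` is feasible for `G'`,
`0 ≤ log det A' - log det A ≤ tr (B (A' - A))`, and the right side is `B u v` times a negative
number, so `B u v ≤ 0`. Now `B` has constant diagonal, nonpositive off-diagonal entries and is
supported on the edges, and reading `A B = 1` entrywise is a maximum principle: the largest
off-diagonal entry of `A` lies on an edge and every other entry with `B i j = 0` is strictly
smaller, so `A u v < x` at non-edges. Finally `B u v = 0` at an edge would give `x = A u v < x`.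
-/

open Filter Topology

namespace Matrix

variable {n : Type*}

lemma PosSemidef.apply_mul_apply_le {M : Matrix n n ℝ} (hM : M.PosSemidef) (i j : n) :
    M i j * M j i ≤ M i i * M j j := by
  have := (hM.submatrix ![i, j]).det_nonneg
  rw [det_fin_two] at this
  simpa [sub_nonneg] using this

variable [Fintype n]

lemma abs_dotProduct_mulVec_le (K : Matrix n n ℝ) (z : n → ℝ) :
    |z ⬝ᵥ K *ᵥ z| ≤ (∑ i, ∑ j, |K i j|) * (z ⬝ᵥ z) := by
  have hsq : ∀ i, z i * z i ≤ z ⬝ᵥ z := fun i =>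
    single_le_sum (f := fun k => z k * z k) (fun k _ => mul_self_nonneg (z k)) (mem_univ i)
  have hz : ∀ i j, |z i * z j| ≤ z ⬝ᵥ z := fun i j => by
    rw [abs_mul]
    nlinarith [hsq i, hsq j, sq_nonneg (|z i| - |z j|), abs_mul_abs_self (z i),
      abs_mul_abs_self (z j)]
  calc |z ⬝ᵥ K *ᵥ z| = |∑ i, ∑ j, K i j * (z i * z j)| := by
        simp only [dotProduct, mulVec, mul_sum]; congr 1; congr! 2; ring
    _ ≤ ∑ i, ∑ j, |K i j| * (z ⬝ᵥ z) := by
        refine (abs_sum_le_sum_abs _ _).trans (sum_le_sum fun i _ => ?_)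
        refine (abs_sum_le_sum_abs _ _).trans (sum_le_sum fun j _ => ?_)
        rw [abs_mul]; exact mul_le_mul_of_nonneg_left (hz i j) (abs_nonneg _)
    _ = _ := by simp only [sum_mul]

lemma isClosed_setOf_posSemidef : IsClosed {M : Matrix n n ℝ | M.PosSemidef} := by
  simp only [posSemidef_iff_dotProduct_mulVec, Set.ofPred_and, Set.ofPred_forall]
  exact (isClosed_eq (continuous_id.matrix_conjTranspose) continuous_id).inter
    (isClosed_iInter fun z => isClosed_le continuous_const (by fun_prop))

lemma isCompact_setOf_posSemidef_diag_eq_one :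
    IsCompact {M : Matrix n n ℝ | M.PosSemidef ∧ ∀ i, M i i = 1} := by
  refine (isCompact_univ_pi fun _ => isCompact_univ_pi fun _ =>
    isCompact_Icc (a := -1) (b := 1)).of_isClosed_subset ?_ ?_
  · simp only [Set.ofPred_and, Set.ofPred_forall]
    exact isClosed_setOf_posSemidef.inter
      (isClosed_iInter fun i => isClosed_eq (by fun_prop) continuous_const)
  · rintro M ⟨hM, hdiag⟩
    simp only [Set.mem_pi, Set.mem_univ, true_implies, Set.mem_Icc, ← abs_le]
    intro i j
    have := hM.apply_mul_apply_le i j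
    rw [hdiag, hdiag, (isHermitian_iff_isSymm.1 hM.isHermitian).apply i j] at this
    nlinarith [abs_mul_abs_self (M i j), abs_nonneg (M i j)]

lemma PosDef.sum_sum_pos [Nonempty n] {B : Matrix n n ℝ} (hB : B.PosDef) :
    0 < ∑ i, ∑ j, B i j := by
  simpa [dotProduct, mulVec] using
    hB.dotProduct_mulVec_pos (x := fun _ => 1)
      (Function.ne_iff.2 ⟨Classical.arbitrary n, one_ne_zero⟩)

variable [DecidableEq n]

open scoped MatrixOrder

lemma PosDef.exists_pos_mul_dotProduct_self_le {A : Matrix n n ℝ} (hA : A.PosDef) :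
    ∃ r > 0, ∀ z : n → ℝ, r * (z ⬝ᵥ z) ≤ z ⬝ᵥ A *ᵥ z := by
  cases isEmpty_or_nonempty n
  · exact ⟨1, one_pos, fun z => by simp [dotProduct]⟩
  obtain ⟨r, hr, hrA⟩ := (CFC.exists_pos_algebraMap_le_iff hA.isHermitian.isSelfAdjoint).2
    fun _ hμ => hA.isStrictlyPositive.spectrum_pos hμ
  refine ⟨r, hr, fun z => ?_⟩
  have := (Matrix.le_iff.mp hrA).dotProduct_mulVec_nonneg z
  simpa [Algebra.algebraMap_eq_smul_one, sub_mulVec, dotProduct_sub, smul_mulVec] using this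

lemma PosDef.eventually_posDef_add_smul {A K : Matrix n n ℝ} (hA : A.PosDef)
    (hK : K.IsHermitian) :
    ∀ᶠ t in 𝓝 (0 : ℝ), (A + t • K).PosDef := by
  obtain ⟨r, hr, hrA⟩ := hA.exists_pos_mul_dotProduct_self_le
  set c := ∑ i, ∑ j, |K i j|
  have hc : 0 ≤ c := sum_nonneg fun i _ => sum_nonneg fun j _ => abs_nonneg _
  filter_upwards [Metric.ball_mem_nhds (0 : ℝ) (div_pos hr (add_pos_of_nonneg_of_pos hc one_pos))]
    with t ht
  rw [Metric.mem_ball, dist_zero_right, Real.norm_eq_abs, lt_div_iff₀ (by positivity)] at ht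
  refine .of_dotProduct_mulVec_pos (hA.isHermitian.add (hK.smul (.all t))) fun z hz => ?_
  have hzz : 0 < z ⬝ᵥ z := dotProduct_self_star_pos_iff.mpr hz
  have hKz := abs_dotProduct_mulVec_le K z
  have : |t * (z ⬝ᵥ K *ᵥ z)| < r * (z ⬝ᵥ z) := by
    rw [abs_mul]
    calc |t| * |z ⬝ᵥ K *ᵥ z| ≤ |t| * (c * (z ⬝ᵥ z)) := by gcongr
      _ < r * (z ⬝ᵥ z) := by nlinarith [abs_nonneg t]
  simp only [star_trivial, add_mulVec, smul_mulVec, dotProduct_add, dotProduct_smul, smul_eq_mul]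
  linarith [hrA z, neg_abs_le (t * (z ⬝ᵥ K *ᵥ z))]

lemma hasDerivAt_det_one_add_smul (M : Matrix n n ℝ) :
    HasDerivAt (fun t : ℝ => (1 + t • M).det) M.trace 0 := by
  have h : (fun t : ℝ => (1 + t • M).det) =
      fun t => (det (1 + (Polynomial.X : Polynomial ℝ) • M.map Polynomial.C)).eval t := by
    ext t
    rw [← Polynomial.coe_evalRingHom, RingHom.map_det]
    congr 1
    ext i j
    by_cases h : i = j <;> simp [h, mul_comm t]
  rw [h, ← derivative_det_one_add_X_smul]
  exact Polynomial.hasDerivAt _ 0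

lemma hasDerivAt_det_add_smul {A : Matrix n n ℝ} (hA : IsUnit A) (K : Matrix n n ℝ) :
    HasDerivAt (fun t : ℝ => (A + t • K).det) (A.det * (A⁻¹ * K).trace) 0 := by
  have h : ∀ t : ℝ, A + t • K = A * (1 + t • (A⁻¹ * K)) := fun t => by
    rw [mul_add, mul_one, Matrix.mul_smul,
      mul_nonsing_inv_cancel_left _ _ ((isUnit_iff_isUnit_det A).mp hA)]
  simp_rw [h, det_mul]
  exact (hasDerivAt_det_one_add_smul _).const_mul _

lemma PosDef.log_det_eq_sum_log_eigenvalues {C : Matrix n n ℝ} (hC : C.PosDef) :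
    log C.det = ∑ i, log (hC.isHermitian.eigenvalues i) := by
  rw [hC.isHermitian.det_eq_prod_eigenvalues, RCLike.ofReal_real_eq_id]
  exact log_prod fun i _ => (hC.eigenvalues_pos i).ne'

lemma PosDef.trace_sub_card_sub_log_det {C : Matrix n n ℝ} (hC : C.PosDef) :
    C.trace - Fintype.card n - log C.det =
      ∑ i, (hC.isHermitian.eigenvalues i - 1 - log (hC.isHermitian.eigenvalues i)) := by
  rw [hC.log_det_eq_sum_log_eigenvalues, hC.isHermitian.trace_eq_sum_eigenvalues]
  simp [sum_sub_distrib]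

lemma PosDef.log_det_le_trace_sub_card {C : Matrix n n ℝ} (hC : C.PosDef) :
    log C.det ≤ C.trace - Fintype.card n := by
  have := sum_nonneg fun i (_ : i ∈ univ) =>
    sub_nonneg.2 (log_le_sub_one_of_pos (hC.eigenvalues_pos i))
  linarith [hC.trace_sub_card_sub_log_det]

lemma PosDef.eq_one_of_log_det_eq_trace_sub_card {C : Matrix n n ℝ} (hC : C.PosDef)
    (h : log C.det = C.trace - Fintype.card n) : C = 1 := by
  have hzero := (sum_eq_zero_iff_of_nonneg fun i (_ : i ∈ univ) =>
    sub_nonneg.2 (log_le_sub_one_of_pos (hC.eigenvalues_pos i))).1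
    (by linarith [hC.trace_sub_card_sub_log_det])
  have hone : ∀ i, hC.isHermitian.eigenvalues i = 1 := fun i => by
    by_contra hne
    linarith [hzero i (mem_univ i), log_lt_sub_one_of_pos (hC.eigenvalues_pos i) hne]
  refine CFC.eq_one_of_spectrum_subset_one (R := ℝ) C ?_ hC.isHermitian.isSelfAdjoint
  rw [hC.isHermitian.spectrum_real_eq_range_eigenvalues]
  rintro _ ⟨i, rfl⟩
  exact hone i

/-- Congruence by `√(A⁻¹)` turns `A⁻¹ * M` into a positive definite matrix. -/
lemma PosDef.exists_posDef_log_det_trace {A M : Matrix n n ℝ} (hA : A.PosDef) (hM : M.PosDef) :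
    ∃ C : Matrix n n ℝ, C.PosDef ∧ log C.det = log M.det - log A.det ∧
      C.trace = (A⁻¹ * M).trace ∧ (C = 1 → M = A) := by
  set S := CFC.sqrt A⁻¹
  have hS : S.PosDef := (hA.inv.isStrictlyPositive.sqrt _).posDef
  have hSS : S * S = A⁻¹ := CFC.sqrt_mul_sqrt_self _ hA.inv.posSemidef.nonneg
  have hC : (S * M * S).PosDef := by
    have := hS.isUnit.posDef_star_left_conjugate_iff.2 hM
    rwa [star_eq_conjTranspose, hS.isHermitian.eq] at this
  have hAu : IsUnit A.det := hA.isUnit.map detMonoidHom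
  refine ⟨S * M * S, hC, ?_, by rw [trace_mul_cycle, hSS], fun hSMS => ?_⟩
  · rw [det_mul, det_mul, mul_comm, ← mul_assoc, ← det_mul, hSS, det_nonsing_inv,
      Ring.inverse_eq_inv', log_mul (inv_pos.2 hA.det_pos).ne' hM.det_pos.ne', log_inv]
    ring
  calc M = A * (A⁻¹ * M * A⁻¹) * A := by
        rw [mul_assoc, mul_assoc, nonsing_inv_mul _ hAu, mul_one,
          mul_nonsing_inv_cancel_left _ _ hAu]
    _ = A := by
        rw [← hSS, show S * S * M * (S * S) = S * (S * M * S) * S by noncomm_ring, hSMS, mul_one,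
          hSS, mul_nonsing_inv _ hAu, one_mul]

lemma PosDef.log_det_sub_log_det_le {A M : Matrix n n ℝ} (hA : A.PosDef) (hM : M.PosDef) :
    log M.det - log A.det ≤ (A⁻¹ * M).trace - Fintype.card n := by
  obtain ⟨C, hC, hdet, htr, -⟩ := hA.exists_posDef_log_det_trace hM
  exact hdet ▸ htr ▸ hC.log_det_le_trace_sub_card

lemma PosDef.eq_of_log_det_sub_log_det_eq {A M : Matrix n n ℝ} (hA : A.PosDef) (hM : M.PosDef)
    (h : log M.det - log A.det = (A⁻¹ * M).trace - Fintype.card n) : M = A := by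
  obtain ⟨C, hC, hdet, htr, hCM⟩ := hA.exists_posDef_log_det_trace hM
  exact hCM (hC.eq_one_of_log_det_eq_trace_sub_card (by rw [hdet, htr, h]))

lemma apply_mul_le_of_mul_eq_one {A B : Matrix n n ℝ} (hAB : A * B = 1)
    (hBoff : ∀ i j, i ≠ j → B i j ≤ 0) {m : ℝ} (hm : ∀ i j, i ≠ j → A i j ≤ m)
    {i j : n} (hij : i ≠ j) (hBij : B i j = 0) :
    A i j * B j j ≤ -(m * ∑ w ∈ univ.erase j, B w j) := by
  have h0 : A i j * B j j + ∑ w ∈ univ.erase j, A i w * B w j = 0 := by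
    rw [add_sum_erase _ (fun w => A i w * B w j) (mem_univ j), ← mul_apply, hAB, one_apply_ne hij]
  have hterm : ∀ w ∈ univ.erase j, m * B w j ≤ A i w * B w j := fun w hw => by
    have hwj := ne_of_mem_erase hw
    by_cases hwi : w = i
    · rw [hwi, hBij, mul_zero, mul_zero]
    · exact mul_le_mul_of_nonpos_right (hm i w (Ne.symm hwi)) (hBoff w j hwj)
  rw [mul_sum]
  linarith [sum_le_sum hterm]

/-- A maximum principle: column `j` of `A * B = 1` gives `A i j ≤ (-s / b) * max_{k ≠ l} A k l`
with `-s / b < 1`, so the maximum sits where `B ≠ 0`, i.e. where `A = x`. -/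
theorem apply_lt_of_mul_eq_one {A B : Matrix n n ℝ} {x b s : ℝ} (hx : 0 < x) (hAB : A * B = 1)
    (hBdiag : ∀ j, B j j = b) (hBoff : ∀ i j, i ≠ j → B i j ≤ 0)
    (hcol : ∀ j, ∑ w ∈ univ.erase j, B w j = s) (hbs : 0 < b + s)
    (hsupp : ∀ i j, i ≠ j → B i j ≠ 0 → A i j = x) {u v : n} (huv : u ≠ v)
    (hBuv : B u v = 0) :
    A u v < x := by
  have hs : s ≤ 0 := hcol u ▸ sum_nonpos fun w hw => hBoff w u (ne_of_mem_erase hw)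
  obtain ⟨p, hp, hpmax⟩ := univ.offDiag.exists_max_image (fun p => A p.1 p.2)
    ⟨(u, v), by simpa using huv⟩
  have hm : ∀ i j, i ≠ j → A i j ≤ A p.1 p.2 := fun i j hij =>
    hpmax (i, j) (by simpa using hij)
  have hlt : ∀ i j, i ≠ j → B i j = 0 → 0 < A p.1 p.2 → A i j < A p.1 p.2 :=
    fun i j hij hB hpos => by
      have := apply_mul_le_of_mul_eq_one hAB hBoff hm hij hB
      rw [hBdiag j, hcol j] at this
      nlinarith
  have hpne : p.1 ≠ p.2 := (mem_offDiag.1 hp).2.2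
  rcases le_or_gt (A p.1 p.2) 0 with hneg | hpos
  · linarith [hm u v huv]
  · have hpx : A p.1 p.2 = x := hsupp _ _ hpne fun hB => (hlt _ _ hpne hB hpos).false
    exact hpx ▸ hlt u v huv hBuv hpos

theorem apply_lt_of_inv_apply_eq_zero {A : Matrix n n ℝ} {x : ℝ} (hx : 0 < x) (hA : A.PosDef)
    (hdiag : ∀ i, A i i = 1) (hBdiag : ∀ i j, A⁻¹ i i = A⁻¹ j j)
    (hBoff : ∀ i j, i ≠ j → A⁻¹ i j ≤ 0)
    (hsupp : ∀ i j, i ≠ j → A⁻¹ i j ≠ 0 → A i j = x)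
    {u v : n} (huv : u ≠ v) (hBuv : A⁻¹ u v = 0) : A u v < x := by
  have hAB : A * A⁻¹ = 1 := mul_nonsing_inv A (hA.isUnit.map detMonoidHom)
  have hBpd := hA.inv
  generalize A⁻¹ = B at *
  have hAsymm := (isHermitian_iff_isSymm.1 hA.isHermitian).apply
  set c : n → ℝ := fun j => ∑ w ∈ univ.erase j, B w j
  -- the diagonal of `A * B = 1`, using that `A = x` wherever `B ≠ 0`
  have hcol : ∀ j, B u u + x * c j = 1 := fun j => by
    have h := congrFun (congrFun hAB j) j
    rw [one_apply_eq, mul_apply, ← add_sum_erase _ _ (mem_univ j), hdiag, one_mul,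
      hBdiag j u] at h
    rw [← h, mul_sum]
    congr 1
    refine sum_congr rfl fun w hw => ?_
    by_cases hBw : B w j = 0
    · simp [hBw]
    · rw [← hAsymm, hsupp w j (ne_of_mem_erase hw) hBw]
  have hc : ∀ j, c j = c u := fun j =>
    mul_left_cancel₀ hx.ne' (by linarith [hcol j, hcol u])
  have hsum : ∑ i, ∑ w, B i w = Fintype.card n * (B u u + c u) :=
    calc ∑ i, ∑ w, B i w = ∑ w, ∑ i, B i w := sum_comm
      _ = ∑ _w : n, (B u u + c u) := sum_congr rfl fun w _ => by
        rw [← add_sum_erase _ _ (mem_univ w), hBdiag w u, ← hc w]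
      _ = Fintype.card n * (B u u + c u) := by simp [mul_add]
  have : Nonempty n := ⟨u⟩
  exact apply_lt_of_mul_eq_one hx hAB (fun j => hBdiag j u) hBoff hc
    (pos_of_mul_pos_right (hsum ▸ hBpd.sum_sum_pos) (Nat.cast_nonneg _)) hsupp huv hBuv

end Matrix

section Orbit

variable {V : Type*}

def pairOrbit (Γ : Type*) [SMul Γ V] (u v : V) : Set (Sym2 V) :=
  Set.range fun g : Γ => s(g • u, g • v)

variable {Γ : Type*} [Group Γ] [MulAction Γ V] {G : SimpleGraph V}

lemma mem_pairOrbit_of_smul_mem {u v i j : V} (g : Γ)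
    (h : s(g • i, g • j) ∈ pairOrbit Γ u v) :
    s(i, j) ∈ pairOrbit Γ u v := by
  obtain ⟨k, hk⟩ := h
  refine ⟨g⁻¹ * k, ?_⟩
  simpa [mul_smul] using congrArg (Sym2.map (g⁻¹ • ·)) hk

lemma deleteEdges_pairOrbit_adj_smul
    (hG : ∀ (g : Γ) i j, G.Adj i j → G.Adj (g • i) (g • j)) (u v : V) (g : Γ) (i j : V)
    (h : (G.deleteEdges (pairOrbit Γ u v)).Adj i j) :
    (G.deleteEdges (pairOrbit Γ u v)).Adj (g • i) (g • j) := by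
  rw [SimpleGraph.deleteEdges_adj] at h ⊢
  exact ⟨hG g i j h.1, fun hmem => h.2 (mem_pairOrbit_of_smul_mem g hmem)⟩

lemma ncard_edgeSet_deleteEdges_pairOrbit_lt [Finite V] {u v : V} (huv : G.Adj u v) :
    (G.deleteEdges (pairOrbit Γ u v)).edgeSet.ncard < G.edgeSet.ncard := by
  rw [SimpleGraph.edgeSet_deleteEdges]
  exact Set.ncard_lt_ncard (Set.sdiff_ssubset_left_iff.2 ⟨s(u, v), huv, 1, by simp⟩)

end Orbit

section MaxDet

variable {V : Type*} [Fintype V] [DecidableEq V] {G : SimpleGraph V} {x : ℝ} {A : Matrix V V ℝ}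

lemma exists_isMaxA (G : SimpleGraph V) (hx0 : 0 ≤ x) (hx1 : x < 1) : ∃ A, IsMaxA G x A := by
  set S := {M : Matrix V V ℝ | M.PosSemidef ∧ ∀ i, M i i = 1} ∩
    {M | ∀ i j, G.Adj i j → M i j = x}
  have hS : IsCompact S := isCompact_setOf_posSemidef_diag_eq_one.inter_right <| by
    simp only [Set.ofPred_forall]
    exact isClosed_iInter fun i => isClosed_iInter fun j => isClosed_iInter fun _ =>
      isClosed_eq (by fun_prop) continuous_const
  set M₀ : Matrix V V ℝ := (1 - x) • 1 + x • vecMulVec 1 1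
  have hM₀ : M₀.PosDef := (PosDef.one.smul (sub_pos.2 hx1)).add_posSemidef
    ((posSemidef_vecMulVec_self_star 1).smul hx0)
  have hM₀S : M₀ ∈ S :=
    ⟨⟨hM₀.posSemidef, fun i => by simp [M₀]⟩, fun i j hij => by simp [M₀, hij.ne]⟩
  obtain ⟨A, ⟨⟨hApsd, hdiag⟩, hedge⟩, hmax⟩ :=
    hS.exists_isMaxOn ⟨M₀, hM₀S⟩ (continuous_id.matrix_det).continuousOn
  have hdet : 0 < A.det := hM₀.det_pos.trans_le (hmax hM₀S)
  exact ⟨A, ⟨hApsd.posDef_iff_det_ne_zero.2 hdet.ne', hdiag, hedge⟩,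
    fun M ⟨hM, hMdiag, hMedge⟩ => hmax ⟨⟨hM.posSemidef, hMdiag⟩, hMedge⟩⟩

namespace IsMaxA

lemma inv_apply_eq_zero (hA : IsMaxA G x A) {u v : V} (huv : u ≠ v) (hnadj : ¬ G.Adj u v) :
    A⁻¹ u v = 0 := by
  obtain ⟨⟨hpd, hdiag, hedge⟩, hmax⟩ := hA
  set K : Matrix V V ℝ := single u v 1 + single v u 1
  have hK : K.IsHermitian := by simp [K, IsHermitian, add_comm]
  have hK0 : ∀ i j, ¬ (i = u ∧ j = v) → ¬ (i = v ∧ j = u) → K i j = 0 := by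
    intro i j _ _
    simp only [K, Matrix.add_apply, single_apply]
    rw [if_neg (by grind), if_neg (by grind), add_zero]
  have hKdiag : ∀ i, K i i = 0 := fun i => hK0 i i (by grind) (by grind)
  have hKedge : ∀ i j, G.Adj i j → K i j = 0 := fun i j hij =>
    hK0 i j (by rintro ⟨rfl, rfl⟩; exact hnadj hij)
      (by rintro ⟨rfl, rfl⟩; exact hnadj hij.symm)
  have hlocal : IsLocalMax (fun t : ℝ => (A + t • K).det) 0 := by
    filter_upwards [hpd.eventually_posDef_add_smul hK] with t ht
    simpa using hmax _ ⟨ht, fun i => by simp [hdiag, hKdiag],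
      fun i j hij => by simp [hedge i j hij, hKedge i j hij]⟩
  have hderiv := hlocal.hasDerivAt_eq_zero (hasDerivAt_det_add_smul hpd.isUnit K)
  have htr : (A⁻¹ * K).trace = 2 * A⁻¹ u v := by
    rw [Matrix.mul_add, trace_add, trace_mul_single, trace_mul_single,
      (isHermitian_iff_isSymm.1 hpd.inv.isHermitian).apply u v]
    simp [two_mul]
  rw [htr] at hderiv
  simpa [hpd.det_pos.ne'] using hderiv

open scoped Classical in
lemma trace_inv_mul_sub_card (hA : IsMaxA G x A) {M : Matrix V V ℝ} (hM : ∀ i, M i i = 1) :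
    (A⁻¹ * M).trace - Fintype.card V =
      ∑ i, ∑ j, if G.Adj i j then A⁻¹ i j * (M j i - x) else 0 := by
  have hcard : (Fintype.card V : ℝ) = (A⁻¹ * A).trace := by
    rw [nonsing_inv_mul _ (hA.1.1.isUnit.map detMonoidHom), trace_one]
  rw [hcard, ← trace_sub, ← Matrix.mul_sub]
  refine sum_congr rfl fun i _ => ?_
  rw [diag_apply, mul_apply]
  refine sum_congr rfl fun j _ => ?_
  split_ifs with hij
  · rw [Matrix.sub_apply, hA.1.2.2 j i hij.symm]
  · by_cases hji : i = j
    · rw [hji, Matrix.sub_apply, hM, hA.1.2.1, sub_self, mul_zero]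
    · rw [hA.inv_apply_eq_zero hji hij, zero_mul]

lemma eq_of_memA (hA : IsMaxA G x A) {M : Matrix V V ℝ} (hM : memA G x M)
    (hdet : M.det = A.det) : M = A := by
  refine hA.1.1.eq_of_log_det_sub_log_det_eq hM.1 ?_
  rw [hA.trace_inv_mul_sub_card hM.2.1, hdet, sub_self]
  refine (sum_eq_zero fun i _ => sum_eq_zero fun j _ => ?_).symm
  split_ifs with hij
  · rw [hM.2.2 j i hij.symm, sub_self, mul_zero]
  · rfl

lemma submatrix_eq (hA : IsMaxA G x A) (σ : V ≃ V)
    (hσ : ∀ i j, G.Adj i j → G.Adj (σ i) (σ j)) :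
    A.submatrix σ σ = A :=
  hA.eq_of_memA ⟨hA.1.1.submatrix σ.injective, fun i => hA.1.2.1 (σ i),
    fun i j hij => hA.1.2.2 _ _ (hσ i j hij)⟩ (det_submatrix_equiv_self σ A)

variable {Γ : Type*} [Group Γ] [MulAction Γ V]

lemma inv_apply_smul (hA : IsMaxA G x A)
    (hG : ∀ (g : Γ) i j, G.Adj i j → G.Adj (g • i) (g • j))
    (g : Γ) (i j : V) : A⁻¹ (g • i) (g • j) = A⁻¹ i j := by
  have := congrArg (·⁻¹) (hA.submatrix_eq (MulAction.toPerm g) (hG g))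
  simp only [inv_submatrix_equiv] at this
  exact congrFun (congrFun this i) j

lemma inv_apply_self_eq [MulAction.IsPretransitive Γ V] (hA : IsMaxA G x A)
    (hG : ∀ (g : Γ) i j, G.Adj i j → G.Adj (g • i) (g • j)) (i j : V) :
    A⁻¹ i i = A⁻¹ j j := by
  obtain ⟨g, rfl⟩ := MulAction.exists_smul_eq Γ i j
  exact (hA.inv_apply_smul hG g i i).symm

lemma inv_apply_eq_of_mem_pairOrbit (hA : IsMaxA G x A)
    (hG : ∀ (g : Γ) i j, G.Adj i j → G.Adj (g • i) (g • j)) {u v i j : V}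
    (h : s(i, j) ∈ pairOrbit Γ u v) : A⁻¹ i j = A⁻¹ u v := by
  obtain ⟨g, hg⟩ := h
  rcases Sym2.eq_iff.1 hg with ⟨rfl, rfl⟩ | ⟨rfl, rfl⟩
  · exact hA.inv_apply_smul hG g u v
  · rw [← (isHermitian_iff_isSymm.1 hA.1.1.inv.isHermitian).apply, hA.inv_apply_smul hG g u v]

lemma inv_apply_nonpos_of_adj (hx0 : 0 ≤ x) (hx1 : x < 1) (hA : IsMaxA G x A)
    (hG : ∀ (g : Γ) i j, G.Adj i j → G.Adj (g • i) (g • j)) {u v : V} (huv : G.Adj u v)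
    (hdel : ∀ A', IsMaxA (G.deleteEdges (pairOrbit Γ u v)) x A' →
      ∀ i j, i ≠ j → ¬ (G.deleteEdges (pairOrbit Γ u v)).Adj i j → A' i j < x) :
    A⁻¹ u v ≤ 0 := by
  classical
  set G' := G.deleteEdges (pairOrbit Γ u v)
  obtain ⟨A', hA'⟩ := exists_isMaxA G' hx0 hx1
  have hdet : A.det ≤ A'.det := hA'.2 A ⟨hA.1.1, hA.1.2.1, fun i j hij => hA.1.2.2 i j hij.1⟩
  have hsum : 0 ≤ ∑ i, ∑ j, if G.Adj i j then A⁻¹ i j * (A' j i - x) else 0 := by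
    rw [← hA.trace_inv_mul_sub_card hA'.1.2.1]
    linarith [hA.1.1.log_det_sub_log_det_le hA'.1.1, log_le_log hA.1.1.det_pos hdet]
  by_contra! hpos
  -- on the deleted orbit `A⁻¹` is constantly `A⁻¹ u v > 0`, while `A'` is strictly below `x`
  have hneg : ∀ i j, G.Adj i j → s(i, j) ∈ pairOrbit Γ u v →
      A⁻¹ i j * (A' j i - x) < 0 := fun i j hij hmem => by
    refine mul_neg_of_pos_of_neg (hA.inv_apply_eq_of_mem_pairOrbit hG hmem ▸ hpos)
      (sub_neg.2 ?_)
    refine hdel A' hA' j i hij.ne.symm fun h => ?_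
    exact (SimpleGraph.deleteEdges_adj.1 h).2 (by rwa [Sym2.eq_swap])
  have hterm : ∀ i j, (if G.Adj i j then A⁻¹ i j * (A' j i - x) else 0) ≤ 0 := fun i j => by
    split_ifs with hij
    · by_cases hmem : s(i, j) ∈ pairOrbit Γ u v
      · exact (hneg i j hij hmem).le
      · rw [hA'.1.2.2 j i (SimpleGraph.deleteEdges_adj.2 ⟨hij.symm, by rwa [Sym2.eq_swap]⟩),
          sub_self, mul_zero]
    · exact le_rfl
  have huv' : (if G.Adj u v then A⁻¹ u v * (A' v u - x) else 0) < 0 := by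
    rw [if_pos huv]
    exact hneg u v huv ⟨1, by simp⟩
  have : ∑ i, ∑ j, (if G.Adj i j then A⁻¹ i j * (A' j i - x) else 0) < 0 :=
    sum_neg' (fun i _ => sum_nonpos fun j _ => hterm i j)
      ⟨u, mem_univ u, sum_neg' (fun j _ => hterm u j) ⟨v, mem_univ v, huv'⟩⟩
  linarith

variable [MulAction.IsPretransitive Γ V]

lemma apply_lt_of_inv_apply_eq_zero (hx : 0 < x) (hA : IsMaxA G x A)
    (hG : ∀ (g : Γ) i j, G.Adj i j → G.Adj (g • i) (g • j))
    (hnonpos : ∀ i j, G.Adj i j → A⁻¹ i j ≤ 0) {u v : V} (huv : u ≠ v)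
    (hB : A⁻¹ u v = 0) :
    A u v < x := by
  have hsupp : ∀ i j, i ≠ j → A⁻¹ i j ≠ 0 → G.Adj i j := fun i j hij hB =>
    by_contra fun hnadj => hB (hA.inv_apply_eq_zero hij hnadj)
  refine Matrix.apply_lt_of_inv_apply_eq_zero hx hA.1.1 hA.1.2.1 (hA.inv_apply_self_eq hG)
    (fun i j hij => ?_) (fun i j hij hB => hA.1.2.2 i j (hsupp i j hij hB)) huv hB
  by_cases hadj : G.Adj i j
  · exact hnonpos i j hadj
  · exact (hA.inv_apply_eq_zero hij hadj).le

theorem apply_lt_of_not_adj (hx : x ∈ Set.Ioo 0 1) (hA : IsMaxA G x A)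
    (hG : ∀ (g : Γ) i j, G.Adj i j → G.Adj (g • i) (g • j)) {u v : V} (huv : u ≠ v)
    (hnadj : ¬ G.Adj u v) : A u v < x := by
  induction hn : G.edgeSet.ncard using Nat.strong_induction_on generalizing G A u v with
  | _ n ih =>
    refine hA.apply_lt_of_inv_apply_eq_zero hx.1 hG (fun i j hij => ?_) huv
      (hA.inv_apply_eq_zero huv hnadj)
    refine hA.inv_apply_nonpos_of_adj hx.1.le hx.2 hG hij fun A' hA' a b hab hnab => ?_
    exact ih _ (hn ▸ ncard_edgeSet_deleteEdges_pairOrbit_lt hij) hA'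
      (deleteEdges_pairOrbit_adj_smul hG i j) hab hnab rfl

theorem inv_apply_neg_of_adj (hx : x ∈ Set.Ioo 0 1) (hA : IsMaxA G x A)
    (hG : ∀ (g : Γ) i j, G.Adj i j → G.Adj (g • i) (g • j)) {u v : V} (huv : G.Adj u v) :
    A⁻¹ u v < 0 := by
  have hnonpos : ∀ i j, G.Adj i j → A⁻¹ i j ≤ 0 := fun i j hij =>
    hA.inv_apply_nonpos_of_adj hx.1.le hx.2 hG hij fun _ hA' _ _ hab hnab =>
      hA'.apply_lt_of_not_adj hx (deleteEdges_pairOrbit_adj_smul hG i j) hab hnab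
  refine (hnonpos u v huv).lt_of_ne fun h => ?_
  have := hA.apply_lt_of_inv_apply_eq_zero hx.1 hG hnonpos huv.ne h
  exact (hA.1.2.2 u v huv ▸ this).false

end IsMaxA

end MaxDet

theorem statement_15 {V : Type*} [Fintype V] [DecidableEq V] (G : SimpleGraph V)
    (htrans : ∀ u v : V, ∃ φ : G ≃g G, φ u = v)
    (x : ℝ) (hx : x ∈ Set.Ioo (0 : ℝ) 1)
    (A : Matrix V V ℝ) (hA : IsMaxA G x A) :
    (∀ u v : V, G.Adj u v → 0 < -(A⁻¹ u v)) ∧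
    (∀ u v : V, u ≠ v → ¬ G.Adj u v → A u v < x) := by
  have : MulAction.IsPretransitive (G ≃g G) V := ⟨htrans⟩
  have hG : ∀ (φ : G ≃g G) i j, G.Adj i j → G.Adj (φ • i) (φ • j) := fun φ _ _ h =>
    φ.map_rel_iff.2 h
  exact ⟨fun u v huv => neg_pos.2 (hA.inv_apply_neg_of_adj hx hG huv),
    fun u v huv hnadj => hA.apply_lt_of_not_adj hx hG huv hnadj⟩
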